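/- Upper bound on the worst-case weighted validation error (main theorem, L2-regularized form): consider the weighted ERM setup and the validation setup. Let S > 0, Q > 0, β₀ ∈ ℝ^k and R ≥ 0, and suppose that for every training weight vector w with ‖w − 1_n‖₂ ≤ S and Σ_i v_i w_i > 0, the (unique) minimizer β*_{v,w} of P_{v,w} satisfies ‖β*_{v,w} − β₀‖ ≤ R. Define ζ ∈ {0,1}^{n'} by ζ_i = I[y'_i ⟨β₀, φ(x'_i)⟩ − ‖φ(x'_i)‖ R > 0] and m = Σ_i ζ_i. Then for every such training weight w and every validation weight w' ∈ ℝ^{n'} with nonnegative entries, ‖w' − 1_{n'}‖₂ ≤ Q and Σ_i w'_i = n', one has VaEr(β*_{v,w}; w') ≤ 1 − (m − Q √(m − m²/n'))/n'. -/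

import Mathlib

open scoped RealInnerProductSpace Classical

/-- The all-ones vector in `ℝ^n` (as a Euclidean space). -/
noncomputable def onesVec (n : ℕ) : EuclideanSpace ℝ (Fin n) := WithLp.toLp 2 (fun _ => 1)

/-!
Within distance `R` of `β₀`, the margin `y ⟪β, φ x⟫` differs from `y ⟪β₀, φ x⟫` by at most
`‖φ x‖ R`, so every validation point with `ζ_i = 1` is classified correctly by `β*` and the
weighted error is at most `1 - Σ w'_i ζ_i / n'`. Since `w' - 1` sums to zero, `Σ (w'_i - 1) ζ_i`
only sees the centred vector `ζ - (m/n') 1`, whose squared norm is `m - m²/n'` for a `0/1` vector;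
Cauchy–Schwarz then gives `Σ w'_i ζ_i ≥ m - Q √(m - m²/n')`.
-/

section Margin

variable {E : Type*} [NormedAddCommGroup E] [InnerProductSpace ℝ E]

theorem mul_inner_pos_of_norm_sub_le {β β₀ u : E} {y R : ℝ} (hy : |y| ≤ 1)
    (hβ : ‖β - β₀‖ ≤ R) (hmargin : 0 < y * ⟪β₀, u⟫ - ‖u‖ * R) : 0 < y * ⟪β, u⟫ := by
  have hdev : |y * ⟪β - β₀, u⟫| ≤ ‖u‖ * R :=
    calc |y * ⟪β - β₀, u⟫| = |y| * |⟪β - β₀, u⟫| := abs_mul _ _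
      _ ≤ 1 * (‖β - β₀‖ * ‖u‖) :=
        mul_le_mul hy (abs_real_inner_le_norm _ _) (abs_nonneg _) zero_le_one
      _ ≤ ‖u‖ * R := by nlinarith [norm_nonneg u]
  have hsplit : y * ⟪β, u⟫ = y * ⟪β₀, u⟫ + y * ⟪β - β₀, u⟫ := by
    rw [inner_sub_left]; ring
  linarith [(abs_le.mp hdev).1]

end Margin

section WeightedSums

variable {ι : Type*} [Fintype ι]

theorem sum_mul_ite_nonpos_le {w ζ g : ι → ℝ} (hw : ∀ i, 0 ≤ w i)
    (hζ : ∀ i, ζ i = 0 ∨ ζ i = 1) (hg : ∀ i, ζ i = 1 → 0 < g i) :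
    ∑ i, w i * (if g i ≤ 0 then (1 : ℝ) else 0) ≤ ∑ i, w i - ∑ i, w i * ζ i := by
  rw [← Finset.sum_sub_distrib]
  refine Finset.sum_le_sum fun i _ => ?_
  rw [show w i - w i * ζ i = w i * (1 - ζ i) by ring]
  refine mul_le_mul_of_nonneg_left ?_ (hw i)
  rcases hζ i with h | h
  · split_ifs <;> simp [h]
  · simp [h, not_le.mpr (hg i h)]

theorem sum_sq_sub_mean_of_mem_zero_one {ζ : ι → ℝ} (hζ : ∀ i, ζ i = 0 ∨ ζ i = 1) :
    ∑ i, (ζ i - (∑ j, ζ j) / Fintype.card ι) ^ 2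
      = ∑ i, ζ i - (∑ i, ζ i) ^ 2 / Fintype.card ι := by
  set m := ∑ j, ζ j
  set N : ℝ := (Fintype.card ι : ℝ)
  have hsq : ∀ i, ζ i ^ 2 = ζ i := fun i => by rcases hζ i with h | h <;> simp [h]
  have hexpand : ∀ i, (ζ i - m / N) ^ 2 = ζ i - 2 * (m / N) * ζ i + (m / N) ^ 2 := fun i => by
    linear_combination hsq i
  simp only [hexpand, Finset.sum_add_distrib, Finset.sum_sub_distrib, ← Finset.mul_sum,
    Finset.sum_const, Finset.card_univ, nsmul_eq_mul]
  rcases eq_or_ne N 0 with hN | hN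
  · simp [hN, m]
  · field_simp; ring

theorem abs_sum_mul_le_norm_mul_sqrt_sum_sq_sub (u : EuclideanSpace ℝ ι) (hu : ∑ i, u i = 0)
    (f : ι → ℝ) (c : ℝ) : |∑ i, u i * f i| ≤ ‖u‖ * √(∑ i, (f i - c) ^ 2) := by
  have hshift : ∑ i, u i * f i = ⟪u, WithLp.toLp 2 (fun i => f i - c)⟫ :=
    calc ∑ i, u i * f i = ∑ i, u i * f i - c * ∑ i, u i := by rw [hu, mul_zero, sub_zero]
      _ = ∑ i, (f i - c) * u i := by
        rw [Finset.mul_sum, ← Finset.sum_sub_distrib]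
        exact Finset.sum_congr rfl fun i _ => by ring
      _ = ⟪u, WithLp.toLp 2 (fun i => f i - c)⟫ := by simp [PiLp.inner_apply]
  have hnorm : ‖(WithLp.toLp 2 (fun i => f i - c) : EuclideanSpace ℝ ι)‖
      = √(∑ i, (f i - c) ^ 2) := by
    simp [EuclideanSpace.norm_eq]
  rw [hshift, ← hnorm]
  exact abs_real_inner_le_norm _ _

end WeightedSums

theorem sum_sub_norm_mul_sqrt_le_sum_mul {N : ℕ} (a : EuclideanSpace ℝ (Fin N))
    (ha : ∑ i, a i = N) {ζ : Fin N → ℝ} (hζ : ∀ i, ζ i = 0 ∨ ζ i = 1) :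
    ∑ i, ζ i - ‖a - onesVec N‖ * √(∑ i, ζ i - (∑ i, ζ i) ^ 2 / N) ≤ ∑ i, a i * ζ i := by
  have hcentred : ∑ i, (a - onesVec N) i = 0 := by
    simp [onesVec, Finset.sum_sub_distrib, ha]
  have hcs := abs_sum_mul_le_norm_mul_sqrt_sum_sq_sub (a - onesVec N) hcentred ζ
    ((∑ j, ζ j) / Fintype.card (Fin N))
  rw [sum_sq_sub_mean_of_mem_zero_one hζ, Fintype.card_fin] at hcs
  have hsplit : ∑ i, a i * ζ i = ∑ i, ζ i + ∑ i, (a - onesVec N) i * ζ i := by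
    rw [← Finset.sum_add_distrib]
    exact Finset.sum_congr rfl fun i _ => by simp [onesVec]; ring
  linarith [(abs_le.mp hcs).1]

theorem drcs_main_upper_bound_general {n n' d k : ℕ}
    (x : Fin n → Fin d → ℝ) (y : Fin n → ℝ)
    (φ : (Fin d → ℝ) → EuclideanSpace ℝ (Fin k))
    (v : Fin n → ℝ)
    (ℓ : ℝ → ℝ)
    (lam : ℝ)
    (x' : Fin n' → Fin d → ℝ) (y' : Fin n' → ℝ) (hy' : ∀ i, y' i = 1 ∨ y' i = -1)
    (S : ℝ) (Q : ℝ)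
    (β₀ : EuclideanSpace ℝ (Fin k)) (R : ℝ)
    (ζ : Fin n' → ℝ)
    (hζ : ∀ i, ζ i = if 0 < y' i * ⟪β₀, φ (x' i)⟫ - ‖φ (x' i)‖ * R then (1 : ℝ) else 0)
    (m : ℝ) (hm : m = ∑ i, ζ i)
    (hball : ∀ w : EuclideanSpace ℝ (Fin n), ‖w - onesVec n‖ ≤ S →
      0 < ∑ i, v i * w i →
      ∀ βstar : EuclideanSpace ℝ (Fin k),
        (∀ β : EuclideanSpace ℝ (Fin k),
          (1 / ∑ i, v i * w i) * (∑ i, v i * w i * ℓ (y i * ⟪βstar, φ (x i)⟫))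
              + (lam / 2) * ‖βstar‖ ^ 2
            ≤ (1 / ∑ i, v i * w i) * (∑ i, v i * w i * ℓ (y i * ⟪β, φ (x i)⟫))
              + (lam / 2) * ‖β‖ ^ 2) →
        ‖βstar - β₀‖ ≤ R) :
    ∀ w : EuclideanSpace ℝ (Fin n), ‖w - onesVec n‖ ≤ S →
      0 < ∑ i, v i * w i →
      ∀ βstar : EuclideanSpace ℝ (Fin k),
        (∀ β : EuclideanSpace ℝ (Fin k),
          (1 / ∑ i, v i * w i) * (∑ i, v i * w i * ℓ (y i * ⟪βstar, φ (x i)⟫))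
              + (lam / 2) * ‖βstar‖ ^ 2
            ≤ (1 / ∑ i, v i * w i) * (∑ i, v i * w i * ℓ (y i * ⟪β, φ (x i)⟫))
              + (lam / 2) * ‖β‖ ^ 2) →
      ∀ w' : EuclideanSpace ℝ (Fin n'), (∀ i, 0 ≤ w' i) → 0 < ∑ i, w' i →
        ‖w' - onesVec n'‖ ≤ Q → (∑ i, w' i) = (n' : ℝ) →
        (∑ i, w' i * (if y' i * ⟪βstar, φ (x' i)⟫ ≤ 0 then (1 : ℝ) else 0))
            / (∑ i, w' i)
          ≤ 1 - (m - Q * Real.sqrt (m - m ^ 2 / (n' : ℝ))) / (n' : ℝ) := by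
  intro w hwS hE βstar hmin w' hw'nn hw'pos hw'Q hw'sum
  have hβ : ‖βstar - β₀‖ ≤ R := hball w hwS hE βstar hmin
  have hζ01 : ∀ i, ζ i = 0 ∨ ζ i = 1 := fun i => by rw [hζ i]; split_ifs <;> simp
  have hcorrect : ∀ i, ζ i = 1 → 0 < y' i * ⟪βstar, φ (x' i)⟫ := fun i hi => by
    refine mul_inner_pos_of_norm_sub_le (by rcases hy' i with h | h <;> simp [h]) hβ ?_
    by_contra hmargin
    simp [hζ i, hmargin] at hi
  have herr := sum_mul_ite_nonpos_le hw'nn hζ01 hcorrect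
  have hcover := sum_sub_norm_mul_sqrt_le_sum_mul w' hw'sum hζ01
  rw [← hm] at hcover
  have hsqrt := mul_le_mul_of_nonneg_right hw'Q (Real.sqrt_nonneg (m - m ^ 2 / n'))
  have hn' : (0 : ℝ) < n' := hw'sum ▸ hw'pos
  rw [hw'sum, div_le_iff₀ hn', sub_mul, one_mul, div_mul_cancel₀ _ hn'.ne']
  linarith

/-- upper bound on the worst-case weighted validation error,
main theorem, L2-regularized form: consider the weighted ERM setup with primal
objective `P_{v,w}(β) = (1/E) Σ_i v_i w_i ℓ(y_i ⟨β, φ(x_i)⟩) + (λ/2)‖β‖²`,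
`E = Σ_i v_i w_i`, and the validation setup. Suppose that for every training
weight `w` with `‖w − 1_n‖₂ ≤ S` and `E > 0`, any global minimizer `βstar` of
`P_{v,w}` satisfies `‖βstar − β₀‖ ≤ R`. With
`ζ_i = I[y'_i ⟨β₀, φ(x'_i)⟩ − ‖φ(x'_i)‖ R > 0]` and `m = Σ_i ζ_i`, for every
such `w`, every such minimizer `βstar`, and every validation weight `w'` with
nonnegative entries, positive total weight, `‖w' − 1_{n'}‖₂ ≤ Q` and
`Σ_i w'_i = n'`, one has `VaEr(βstar; w') ≤ 1 − (m − Q √(m − m²/n'))/n'`. -/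
theorem drcs_main_upper_bound {n n' d k : ℕ}
    (x : Fin n → Fin d → ℝ) (y : Fin n → ℝ) (hy : ∀ i, y i = 1 ∨ y i = -1)
    (φ : (Fin d → ℝ) → EuclideanSpace ℝ (Fin k))
    (v : Fin n → ℝ) (hv : ∀ i, v i = 0 ∨ v i = 1)
    (ℓ : ℝ → ℝ) (hℓ : ConvexOn ℝ Set.univ ℓ)
    (lam : ℝ) (hlam : 0 < lam)
    (x' : Fin n' → Fin d → ℝ) (y' : Fin n' → ℝ) (hy' : ∀ i, y' i = 1 ∨ y' i = -1)
    (S : ℝ) (hS : 0 < S) (Q : ℝ) (hQ : 0 < Q)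
    (β₀ : EuclideanSpace ℝ (Fin k)) (R : ℝ) (hR : 0 ≤ R)
    (ζ : Fin n' → ℝ)
    (hζ : ∀ i, ζ i = if 0 < y' i * ⟪β₀, φ (x' i)⟫ - ‖φ (x' i)‖ * R then (1 : ℝ) else 0)
    (m : ℝ) (hm : m = ∑ i, ζ i)
    (hball : ∀ w : EuclideanSpace ℝ (Fin n), ‖w - onesVec n‖ ≤ S →
      0 < ∑ i, v i * w i →
      ∀ βstar : EuclideanSpace ℝ (Fin k),
        (∀ β : EuclideanSpace ℝ (Fin k),
          (1 / ∑ i, v i * w i) * (∑ i, v i * w i * ℓ (y i * ⟪βstar, φ (x i)⟫))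
              + (lam / 2) * ‖βstar‖ ^ 2
            ≤ (1 / ∑ i, v i * w i) * (∑ i, v i * w i * ℓ (y i * ⟪β, φ (x i)⟫))
              + (lam / 2) * ‖β‖ ^ 2) →
        ‖βstar - β₀‖ ≤ R) :
    ∀ w : EuclideanSpace ℝ (Fin n), ‖w - onesVec n‖ ≤ S →
      0 < ∑ i, v i * w i →
      ∀ βstar : EuclideanSpace ℝ (Fin k),
        (∀ β : EuclideanSpace ℝ (Fin k),
          (1 / ∑ i, v i * w i) * (∑ i, v i * w i * ℓ (y i * ⟪βstar, φ (x i)⟫))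
              + (lam / 2) * ‖βstar‖ ^ 2
            ≤ (1 / ∑ i, v i * w i) * (∑ i, v i * w i * ℓ (y i * ⟪β, φ (x i)⟫))
              + (lam / 2) * ‖β‖ ^ 2) →
      ∀ w' : EuclideanSpace ℝ (Fin n'), (∀ i, 0 ≤ w' i) → 0 < ∑ i, w' i →
        ‖w' - onesVec n'‖ ≤ Q → (∑ i, w' i) = (n' : ℝ) →
        (∑ i, w' i * (if y' i * ⟪βstar, φ (x' i)⟫ ≤ 0 then (1 : ℝ) else 0))
            / (∑ i, w' i)
          ≤ 1 - (m - Q * Real.sqrt (m - m ^ 2 / (n' : ℝ))) / (n' : ℝ) :=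
  drcs_main_upper_bound_general x y φ v ℓ lam x' y' hy' S Q β₀ R ζ hζ m hm hball
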